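/- arXiv:2306.06721 — 7 statements merged into one kernel-verified Lean document; each statement's English description precedes it below -/
import Mathlib

section
/- Let H be a real Hilbert space, λ > 0, and φ : ℝ^d → H a feature map with ‖φ(v)‖_H ≤ 1 for all v ∈ ℝ^d. Let (u_1,v_1),…,(u_n,v_n) and (u'_1,v'_1),…,(u'_n,v'_n) be two datasets in ℝ × ℝ^d that differ in at most one index, with |u_i| ≤ 1 and |u'_i| ≤ 1 for all i. Let w and w' be minimizers over H of the kernel ridge regression objectives (λ/2)‖w‖²_H + (1/n)Σ_{i=1}^n (u_i − ⟨w, φ(v_i)⟩)² and (λ/2)‖w‖²_H + (1/n)Σ_{i=1}^n (u'_i − ⟨w, φ(v'_i)⟩)², respectively. Then for every v ∈ ℝ^d, |⟨w, φ(v)⟩ − ⟨w', φ(v)⟩| ≤ 8√2/(λ^{3/2} n) + 8/(λ n). -/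
/-!
The KRR objective `J` is `λ`-strongly convex, so a minimizer `w` satisfies
`J w + λ/4 ‖z - w‖² ≤ J z` (compare `J w` with `J` at the midpoint of `w` and `z`).
Adding this for both minimizers, the regularization terms cancel and, the datasets being
neighbors, the data terms differ only at one index `i₀`. There each squared loss is
Lipschitz with constant `2 + ‖w‖ + ‖w'‖ ≤ 2 + 2√(2/λ)` (comparing with `J 0` gives
`‖w‖² ≤ 2/λ`), whence `λ/2 ‖w - w'‖² ≤ 4 (1 + √(2/λ)) ‖w - w'‖ / n`.
Finally `|⟨w - w', φ z⟩| ≤ ‖w - w'‖` since `‖φ z‖ ≤ 1`.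
-/

open scoped RealInnerProductSpace

section KRR

variable {H : Type*} [NormedAddCommGroup H] [InnerProductSpace ℝ H] {n : ℕ}

theorem abs_inner_le_norm_of_norm_le_one {a : H} (ha : ‖a‖ ≤ 1) (y : H) :
    |⟪y, a⟫| ≤ ‖y‖ :=
  (abs_real_inner_le_norm y a).trans (mul_le_of_le_one_right (norm_nonneg y) ha)

theorem abs_sq_sub_inner_sub_sq_sub_inner_le {c : ℝ} {a : H} (hc : |c| ≤ 1) (ha : ‖a‖ ≤ 1)
    (y z : H) :
    |(c - ⟪y, a⟫) ^ 2 - (c - ⟪z, a⟫) ^ 2| ≤ ‖y - z‖ * (2 + ‖y‖ + ‖z‖) := by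
  have hfactor : (c - ⟪y, a⟫) ^ 2 - (c - ⟪z, a⟫) ^ 2 =
      ⟪z - y, a⟫ * (2 * c - ⟪y, a⟫ - ⟪z, a⟫) := by
    rw [inner_sub_left]
    ring
  have hsum : |2 * c - ⟪y, a⟫ - ⟪z, a⟫| ≤ 2 + ‖y‖ + ‖z‖ := by
    have hy := abs_inner_le_norm_of_norm_le_one ha y
    have hz := abs_inner_le_norm_of_norm_le_one ha z
    rw [abs_le] at hc hy hz ⊢
    constructor <;> linarith
  rw [hfactor, abs_mul, norm_sub_rev]
  exact mul_le_mul (abs_inner_le_norm_of_norm_le_one ha _) hsum (abs_nonneg _) (norm_nonneg _)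

noncomputable def krrObjective (lam : ℝ) (c : Fin n → ℝ) (a : Fin n → H) (y : H) : ℝ :=
  lam / 2 * ‖y‖ ^ 2 + (1 / n) * ∑ i, (c i - ⟪y, a i⟫) ^ 2

variable (lam : ℝ) (c : Fin n → ℝ) (a : Fin n → H)

theorem krrObjective_midpoint_le (y z : H) :
    krrObjective lam c a ((2 : ℝ)⁻¹ • (y + z)) ≤
      (krrObjective lam c a y + krrObjective lam c a z) / 2 - lam / 8 * ‖y - z‖ ^ 2 := by
  have hnorm : ‖(2 : ℝ)⁻¹ • (y + z)‖ ^ 2 = (‖y‖ ^ 2 + ‖z‖ ^ 2) / 2 - ‖y - z‖ ^ 2 / 4 := by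
    rw [norm_smul, mul_pow, norm_add_sq_real, norm_sub_sq_real, norm_inv, Real.norm_ofNat]
    ring
  have hloss : ∑ i, (c i - ⟪(2 : ℝ)⁻¹ • (y + z), a i⟫) ^ 2 ≤
      (∑ i, (c i - ⟪y, a i⟫) ^ 2 + ∑ i, (c i - ⟪z, a i⟫) ^ 2) / 2 := by
    rw [← Finset.sum_add_distrib, Finset.sum_div]
    refine Finset.sum_le_sum fun i _ => ?_
    rw [real_inner_smul_left, inner_add_left]
    nlinarith [sq_nonneg (⟪y, a i⟫ - ⟪z, a i⟫)]
  have hn : (0 : ℝ) ≤ 1 / n := by positivity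
  unfold krrObjective
  rw [hnorm]
  nlinarith [mul_le_mul_of_nonneg_left hloss hn]

theorem krrObjective_add_le_of_minimizer {w : H}
    (hw : ∀ y, krrObjective lam c a w ≤ krrObjective lam c a y) (z : H) :
    krrObjective lam c a w + lam / 4 * ‖z - w‖ ^ 2 ≤ krrObjective lam c a z := by
  have hmid := (hw _).trans (krrObjective_midpoint_le lam c a w z)
  rw [norm_sub_rev]
  linarith

theorem mean_sq_le_one (hc : ∀ i, |c i| ≤ 1) : (1 / n : ℝ) * ∑ i, c i ^ 2 ≤ 1 := by
  have hsum : ∑ i, c i ^ 2 ≤ n := by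
    simpa using Finset.sum_le_card_nsmul Finset.univ (fun i => c i ^ 2) 1
      fun i _ => (sq_le_one_iff_abs_le_one _).mpr (hc i)
  rw [one_div_mul_eq_div]
  exact div_le_one_of_le₀ hsum n.cast_nonneg

theorem krrObjective_zero : krrObjective lam c a 0 = (1 / n : ℝ) * ∑ i, c i ^ 2 := by
  simp [krrObjective]

theorem norm_le_of_krr_minimizer (hlam : 0 < lam) (hc : ∀ i, |c i| ≤ 1) {w : H}
    (hw : ∀ y, krrObjective lam c a w ≤ krrObjective lam c a y) :
    ‖w‖ ≤ √(2 / lam) := by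
  have h0 : krrObjective lam c a w ≤ 1 :=
    (hw 0).trans ((krrObjective_zero lam c a).trans_le (mean_sq_le_one c hc))
  have hloss : 0 ≤ (1 / n : ℝ) * ∑ i, (c i - ⟪w, a i⟫) ^ 2 := by positivity
  refine Real.le_sqrt_of_sq_le ?_
  rw [le_div_iff₀ hlam]
  unfold krrObjective at h0
  linarith

theorem krrObjective_sub_krrObjective_of_neighbor {c' : Fin n → ℝ} {a' : Fin n → H}
    {i₀ : Fin n} (hnb : ∀ i, i ≠ i₀ → c i = c' i ∧ a i = a' i) (y : H) :
    krrObjective lam c a y - krrObjective lam c' a' y =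
      (1 / n : ℝ) * ((c i₀ - ⟪y, a i₀⟫) ^ 2 - (c' i₀ - ⟪y, a' i₀⟫) ^ 2) := by
  unfold krrObjective
  rw [add_sub_add_left_eq_sub, ← mul_sub, ← Finset.sum_sub_distrib,
    Finset.sum_eq_single_of_mem i₀ (Finset.mem_univ _)]
  intro i _ hi
  obtain ⟨hci, hai⟩ := hnb i hi
  rw [hci, hai, sub_self]

theorem norm_sub_le_of_neighbor_krr_minimizers (hlam : 0 < lam) {c' : Fin n → ℝ}
    {a' : Fin n → H} (hc : ∀ i, |c i| ≤ 1) (hc' : ∀ i, |c' i| ≤ 1) (ha : ∀ i, ‖a i‖ ≤ 1)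
    (ha' : ∀ i, ‖a' i‖ ≤ 1) {i₀ : Fin n} (hnb : ∀ i, i ≠ i₀ → c i = c' i ∧ a i = a' i)
    {w w' : H} (hw : ∀ y, krrObjective lam c a w ≤ krrObjective lam c a y)
    (hw' : ∀ y, krrObjective lam c' a' w' ≤ krrObjective lam c' a' y) :
    ‖w - w'‖ ≤ 8 * (1 + √(2 / lam)) / (lam * n) := by
  have hn : (0 : ℝ) < n := Nat.cast_pos.mpr i₀.pos
  have hnorms : ‖w‖ + ‖w'‖ ≤ 2 * √(2 / lam) := by
    linarith [norm_le_of_krr_minimizer lam c a hlam hc hw,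
      norm_le_of_krr_minimizer lam c' a' hlam hc' hw']
  have hloss := (le_abs_self _).trans
    (abs_sq_sub_inner_sub_sq_sub_inner_le (hc i₀) (ha i₀) w' w)
  have hloss' := (le_abs_self _).trans
    (abs_sq_sub_inner_sub_sq_sub_inner_le (hc' i₀) (ha' i₀) w w')
  have hconv : lam * n * ‖w - w'‖ ^ 2 ≤ 8 * (1 + √(2 / lam)) * ‖w - w'‖ := by
    have h := krrObjective_add_le_of_minimizer lam c a hw w'
    have h' := krrObjective_add_le_of_minimizer lam c' a' hw' w
    have e := krrObjective_sub_krrObjective_of_neighbor lam c a hnb w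
    have e' := krrObjective_sub_krrObjective_of_neighbor lam c a hnb w'
    rw [norm_sub_rev] at h hloss
    have hdiff : lam / 2 * ‖w - w'‖ ^ 2 ≤ (1 / n : ℝ) *
        (((c i₀ - ⟪w', a i₀⟫) ^ 2 - (c i₀ - ⟪w, a i₀⟫) ^ 2) +
          ((c' i₀ - ⟪w, a' i₀⟫) ^ 2 - (c' i₀ - ⟪w', a' i₀⟫) ^ 2)) := by
      linear_combination h + h' + e' - e
    rw [one_div_mul_eq_div, le_div_iff₀ hn] at hdiff
    nlinarith [mul_le_mul_of_nonneg_left hnorms (norm_nonneg (w - w'))]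
  rw [le_div_iff₀ (by positivity)]
  rcases (norm_nonneg (w - w')).eq_or_lt with ht | ht
  · rw [← ht, zero_mul]
    positivity
  · exact le_of_mul_le_mul_right (by linarith) ht

end KRR

theorem krr_prediction_sensitivity_general
    {H : Type*} [NormedAddCommGroup H] [InnerProductSpace ℝ H]
    {d n : ℕ}
    (lam : ℝ) (hlam : 0 < lam)
    (φ : EuclideanSpace ℝ (Fin d) → H) (hφ : ∀ v, ‖φ v‖ ≤ 1)
    (u u' : Fin n → ℝ) (v v' : Fin n → EuclideanSpace ℝ (Fin d))
    (hu : ∀ i, |u i| ≤ 1) (hu' : ∀ i, |u' i| ≤ 1)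
    (hneighbor : ∃ i₀ : Fin n, ∀ i, i ≠ i₀ → u i = u' i ∧ v i = v' i)
    (w w' : H)
    (hw : ∀ z : H,
      lam / 2 * ‖w‖ ^ 2 + (1 / n) * ∑ i, (u i - ⟪w, φ (v i)⟫) ^ 2 ≤
        lam / 2 * ‖z‖ ^ 2 + (1 / n) * ∑ i, (u i - ⟪z, φ (v i)⟫) ^ 2)
    (hw' : ∀ z : H,
      lam / 2 * ‖w'‖ ^ 2 + (1 / n) * ∑ i, (u' i - ⟪w', φ (v' i)⟫) ^ 2 ≤
        lam / 2 * ‖z‖ ^ 2 + (1 / n) * ∑ i, (u' i - ⟪z, φ (v' i)⟫) ^ 2) :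
    ∀ z : EuclideanSpace ℝ (Fin d),
      |⟪w, φ z⟫ - ⟪w', φ z⟫| ≤
        8 * Real.sqrt 2 / (lam ^ ((3 : ℝ) / 2) * n) + 8 / (lam * n) := by
  intro z
  obtain ⟨i₀, hnb⟩ := hneighbor
  have hdist : ‖w - w'‖ ≤ 8 * (1 + √(2 / lam)) / (lam * n) :=
    norm_sub_le_of_neighbor_krr_minimizers lam u (fun i => φ (v i)) hlam hu hu'
      (fun _ => hφ _) (fun _ => hφ _) (i₀ := i₀)
      (fun i hi => ⟨(hnb i hi).1, congrArg φ (hnb i hi).2⟩) hw hw'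
  have hbound : 8 * (1 + √(2 / lam)) / (lam * n) =
      8 * √2 / (lam ^ ((3 : ℝ) / 2) * n) + 8 / (lam * n) := by
    have hpow : lam ^ ((3 : ℝ) / 2) = lam * √lam := by
      rw [show (3 : ℝ) / 2 = 1 + 1 / 2 by norm_num, Real.rpow_add hlam, Real.rpow_one,
        Real.sqrt_eq_rpow]
    rw [hpow, Real.sqrt_div' 2 hlam.le]
    ring
  rw [← inner_sub_left, ← hbound]
  exact (abs_inner_le_norm_of_norm_le_one (hφ z) _).trans hdist

/-- **Sensitivity of kernel ridge regression predictions** (Theorem 5 of Kusner et al.).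
Let `H` be a real Hilbert space, `λ > 0`, and `φ : ℝ^d → H` a feature map with
`‖φ v‖ ≤ 1`. Let `(u_i, v_i)` and `(u'_i, v'_i)` be two datasets of size `n` in
`ℝ × ℝ^d` differing in at most one index, with `|u_i| ≤ 1` and `|u'_i| ≤ 1`.
If `w` and `w'` minimize the respective KRR objectives with regularization `λ`,
then for every `v`, `|⟨w, φ v⟩ − ⟨w', φ v⟩| ≤ 8√2/(λ^{3/2} n) + 8/(λ n)`. -/
theorem krr_prediction_sensitivity
    {H : Type*} [NormedAddCommGroup H] [InnerProductSpace ℝ H] [CompleteSpace H]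
    {d n : ℕ} (hn : 0 < n)
    (lam : ℝ) (hlam : 0 < lam)
    (φ : EuclideanSpace ℝ (Fin d) → H) (hφ : ∀ v, ‖φ v‖ ≤ 1)
    (u u' : Fin n → ℝ) (v v' : Fin n → EuclideanSpace ℝ (Fin d))
    (hu : ∀ i, |u i| ≤ 1) (hu' : ∀ i, |u' i| ≤ 1)
    (hneighbor : ∃ i₀ : Fin n, ∀ i, i ≠ i₀ → u i = u' i ∧ v i = v' i)
    (w w' : H)
    (hw : ∀ z : H,
      lam / 2 * ‖w‖ ^ 2 + (1 / n) * ∑ i, (u i - ⟪w, φ (v i)⟫) ^ 2 ≤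
        lam / 2 * ‖z‖ ^ 2 + (1 / n) * ∑ i, (u i - ⟪z, φ (v i)⟫) ^ 2)
    (hw' : ∀ z : H,
      lam / 2 * ‖w'‖ ^ 2 + (1 / n) * ∑ i, (u' i - ⟪w', φ (v' i)⟫) ^ 2 ≤
        lam / 2 * ‖z‖ ^ 2 + (1 / n) * ∑ i, (u' i - ⟪z, φ (v' i)⟫) ^ 2) :
    ∀ z : EuclideanSpace ℝ (Fin d),
      |⟪w, φ z⟫ - ⟪w', φ z⟫| ≤
        8 * Real.sqrt 2 / (lam ^ ((3 : ℝ) / 2) * n) + 8 / (lam * n) :=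
  krr_prediction_sensitivity_general lam hlam φ hφ u u' v v' hu hu' hneighbor w w' hw hw'
end

section
/- Let H be a real Hilbert space, λ > 0, and φ : ℝ^d → H with ‖φ(z)‖_H ≤ 1 for all z ∈ ℝ^d. Let D = (x_i,y_i,z_i)_{i=1}^n and D' = (x'_i,y'_i,z'_i)_{i=1}^n be neighboring datasets in ℝ × ℝ × ℝ^d (differing in at most one index) with |x_i|,|y_i|,|x'_i|,|y'_i| ≤ 1 for all i. Let w_X, w_Y be KRR minimizers (regularization λ) for fitting (x_i) to (z_i) and (y_i) to (z_i) respectively, and w'_X, w'_Y the analogous minimizers for D'. Define the residual products R_i = (x_i − ⟨w_X, φ(z_i)⟩)(y_i − ⟨w_Y, φ(z_i)⟩) and R'_i = (x'_i − ⟨w'_X, φ(z'_i)⟩)(y'_i − ⟨w'_Y, φ(z'_i)⟩). Then the ℓ1 distance satisfies Σ_{i=1}^n |R_i − R'_i| ≤ C, where C = 4(1 + √2/√λ)(1 + √2/√λ + 4√2/λ^{3/2} + 4/λ). -/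
/-!
The KRR loss is `λ`-strongly convex, so comparing each minimizer with the midpoint between it and
the other dataset's minimizer shows that neighbouring datasets, whose losses differ in a single
`1/n`-weighted term, have minimizers at distance `O(1/(λ n))`. Comparing with `0` bounds every
minimizer by `√2/√λ`, hence every residual by `B = 1 + √2/√λ`. The residual vectors of the two
datasets thus differ by at most `2B` at the changed index and by `O(1/(λ n))` elsewhere, and
`ab - a'b' = a (b - b') + (a - a') b'` turns this into the bound on the residual products.
-/

open scoped RealInnerProductSpace
open Finset Set

section

variable {H : Type*} [NormedAddCommGroup H] [InnerProductSpace ℝ H]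

theorem StrongConvexOn.add_le_of_forall_le {f : H → ℝ} {m : ℝ} {w : H}
    (hf : StrongConvexOn univ m f) (hw : ∀ v, f w ≤ f v) (v : H) :
    f w + m / 4 * ‖v - w‖ ^ 2 ≤ f v := by
  have hmid := hf.2 (mem_univ w) (mem_univ v) (by norm_num : (0 : ℝ) ≤ 1 / 2)
    (by norm_num : (0 : ℝ) ≤ 1 / 2) (by norm_num)
  have := hw ((1 / 2 : ℝ) • w + (1 / 2 : ℝ) • v)
  rw [norm_sub_rev] at hmid
  simp only [smul_eq_mul] at hmid
  linarith

theorem convexOn_sum_sq_sub_inner {ι : Type*} (s : Finset ι) (c : ι → ℝ) (p : ι → H) :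
    ConvexOn ℝ univ fun w : H => ∑ i ∈ s, (c i - ⟪w, p i⟫) ^ 2 := by
  induction s using Finset.cons_induction with
  | empty => simpa using convexOn_const (0 : ℝ) convex_univ
  | cons i s _ ih =>
    simp only [Finset.sum_cons]
    refine ConvexOn.add ?_ ih
    have hsq : ConvexOn ℝ univ fun t : ℝ => (c i - t) ^ 2 :=
      (even_two.convexOn_pow (𝕜 := ℝ)).comp_affineMap
        (AffineMap.const ℝ ℝ (c i) - AffineMap.id ℝ ℝ)
    simp_rw [real_inner_comm (p i)]
    exact hsq.comp_linearMap (innerₛₗ ℝ (p i))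

theorem abs_sub_inner_sub_sub_inner_le (c : ℝ) (w w' : H) {u : H} (hu : ‖u‖ ≤ 1) :
    |(c - ⟪w, u⟫) - (c - ⟪w', u⟫)| ≤ ‖w - w'‖ := by
  rw [sub_sub_sub_cancel_left, abs_sub_comm, ← inner_sub_left]
  calc |⟪w - w', u⟫| ≤ ‖w - w'‖ * ‖u‖ := abs_real_inner_le_norm _ _
    _ ≤ ‖w - w'‖ := mul_le_of_le_one_right (norm_nonneg _) hu

theorem abs_sub_inner_le {c r : ℝ} {w u : H} (hc : |c| ≤ 1) (hw : ‖w‖ ≤ r) (hu : ‖u‖ ≤ 1) :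
    |c - ⟪w, u⟫| ≤ 1 + r :=
  calc |c - ⟪w, u⟫| ≤ |c| + ‖w‖ * ‖u‖ :=
        (abs_sub c _).trans (by gcongr; exact abs_real_inner_le_norm w u)
    _ ≤ 1 + r := by gcongr; exact (mul_le_of_le_one_right (norm_nonneg w) hu).trans hw

end

theorem sq_sub_sq_le_of_abs_le {a b B : ℝ} (ha : |a| ≤ B) (hb : |b| ≤ B) :
    a ^ 2 - b ^ 2 ≤ 2 * B * |a - b| := by
  calc a ^ 2 - b ^ 2 = (a + b) * (a - b) := by ring
    _ ≤ |a + b| * |a - b| := by rw [← abs_mul]; exact le_abs_self _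
    _ ≤ 2 * B * |a - b| := by
      gcongr
      linarith [abs_add_le a b]

theorem abs_mul_sub_mul_le {a a' b b' B : ℝ} (ha : |a| ≤ B) (hb' : |b'| ≤ B) :
    |a * b - a' * b'| ≤ B * (|a - a'| + |b - b'|) := by
  calc |a * b - a' * b'| = |a * (b - b') + (a - a') * b'| := by ring_nf
    _ ≤ |a| * |b - b'| + |a - a'| * |b'| := by
      rw [← abs_mul, ← abs_mul]; exact abs_add_le _ _
    _ ≤ B * |b - b'| + |a - a'| * B := by gcongr
    _ = B * (|a - a'| + |b - b'|) := by ring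

theorem Fintype.sum_le_add_card_mul {ι : Type*} [Fintype ι] {f : ι → ℝ} {a b : ℝ} (i₀ : ι)
    (hb : 0 ≤ b) (h₀ : f i₀ ≤ a) (h : ∀ i, i ≠ i₀ → f i ≤ b) :
    ∑ i, f i ≤ a + Fintype.card ι * b := by
  classical
  rw [← Finset.add_sum_erase _ _ (mem_univ i₀)]
  gcongr
  calc ∑ i ∈ univ.erase i₀, f i ≤ (univ.erase i₀).card * b :=
        Finset.sum_le_card_nsmul _ _ _ (fun i hi => h i (ne_of_mem_erase hi)) |>.trans_eq
          (nsmul_eq_mul _ _)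
    _ ≤ Fintype.card ι * b := by
      gcongr
      exact card_erase_le

theorem one_add_sqrt_two_div_sqrt_mul {lam : ℝ} (hlam : 0 < lam) :
    (1 + √2 / √lam) * (1 + 4 / lam) =
      1 + √2 / √lam + 4 * √2 / lam ^ ((3 : ℝ) / 2) + 4 / lam := by
  have hlam32 : lam ^ ((3 : ℝ) / 2) = lam * √lam := by
    rw [show (3 : ℝ) / 2 = 1 + 1 / 2 by norm_num, Real.rpow_add hlam, Real.rpow_one,
      Real.sqrt_eq_rpow]
  rw [hlam32]
  field_simp
  ring

section KRR

variable {H : Type*} [NormedAddCommGroup H] [InnerProductSpace ℝ H] {n : ℕ} {lam : ℝ}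

/-- `p i` stands for the feature vector `φ (z i)`. -/
noncomputable def krrLoss (lam : ℝ) (c : Fin n → ℝ) (p : Fin n → H) (w : H) : ℝ :=
  lam / 2 * ‖w‖ ^ 2 + (1 / n) * ∑ i, (c i - ⟪w, p i⟫) ^ 2

theorem krrLoss_strongConvexOn (c : Fin n → ℝ) (p : Fin n → H) :
    StrongConvexOn univ lam (krrLoss lam c p) := by
  rw [strongConvexOn_iff_convex]
  simpa [krrLoss] using
    (convexOn_sum_sq_sub_inner univ c p).smul (by positivity : (0 : ℝ) ≤ 1 / n)

theorem norm_le_of_krrLoss_le_krrLoss_zero (hlam : 0 < lam) {c : Fin n → ℝ}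
    (hc : ∀ i, |c i| ≤ 1) {p : Fin n → H} {w : H}
    (hw : krrLoss lam c p w ≤ krrLoss lam c p 0) :
    ‖w‖ ≤ √2 / √lam := by
  have hdata : (1 / n : ℝ) * ∑ i, c i ^ 2 ≤ 1 := by
    rw [one_div_mul_eq_div]
    refine div_le_one_of_le₀ ?_ n.cast_nonneg
    simpa using sum_le_card_nsmul univ (fun i => c i ^ 2) 1
      (fun i _ => by simpa [sq_abs] using pow_le_one₀ (abs_nonneg (c i)) (hc i) (n := 2))
  have hres : 0 ≤ (1 / n : ℝ) * ∑ i, (c i - ⟪w, p i⟫) ^ 2 := by positivity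
  simp only [krrLoss, norm_zero, inner_zero_left, sub_zero] at hw
  rw [← Real.sqrt_div zero_le_two, Real.le_sqrt (norm_nonneg _) (by positivity), le_div_iff₀ hlam]
  nlinarith

theorem krrLoss_sub_krrLoss_of_eq_of_ne {a a' : Fin n → ℝ} {p p' : Fin n → H} {i₀ : Fin n}
    (hne : ∀ i, i ≠ i₀ → a i = a' i ∧ p i = p' i) (v : H) :
    krrLoss lam a p v - krrLoss lam a' p' v =
      (1 / n) * ((a i₀ - ⟪v, p i₀⟫) ^ 2 - (a' i₀ - ⟪v, p' i₀⟫) ^ 2) := by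
  simp only [krrLoss, add_sub_add_left_eq_sub, ← mul_sub, ← sum_sub_distrib]
  congr 1
  refine sum_eq_single_of_mem i₀ (mem_univ _) fun i _ hi => ?_
  rw [(hne i hi).1, (hne i hi).2, sub_self]

variable {a a' : Fin n → ℝ} {p p' : Fin n → H} {i₀ : Fin n} {w w' : H}

theorem norm_sub_le_of_krr_neighbors (hlam : 0 < lam)
    (ha : ∀ i, |a i| ≤ 1) (ha' : ∀ i, |a' i| ≤ 1)
    (hp : ∀ i, ‖p i‖ ≤ 1) (hp' : ∀ i, ‖p' i‖ ≤ 1)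
    (hne : ∀ i, i ≠ i₀ → a i = a' i ∧ p i = p' i)
    (hw : ∀ v, krrLoss lam a p w ≤ krrLoss lam a p v)
    (hw' : ∀ v, krrLoss lam a' p' w' ≤ krrLoss lam a' p' v) :
    ‖w - w'‖ ≤ 8 * (1 + √2 / √lam) / (lam * n) := by
  set B := 1 + √2 / √lam
  set δ := ‖w - w'‖
  have hn : (0 : ℝ) < n := by exact_mod_cast i₀.pos
  have hnw := norm_le_of_krrLoss_le_krrLoss_zero hlam ha (hw 0)
  have hnw' := norm_le_of_krrLoss_le_krrLoss_zero hlam ha' (hw' 0)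
  have hsc := (krrLoss_strongConvexOn a p).add_le_of_forall_le hw w'
  have hsc' := (krrLoss_strongConvexOn a' p').add_le_of_forall_le hw' w
  rw [norm_sub_rev] at hsc
  have h₁ : (a i₀ - ⟪w', p i₀⟫) ^ 2 - (a i₀ - ⟪w, p i₀⟫) ^ 2 ≤ 2 * B * δ :=
    (sq_sub_sq_le_of_abs_le (abs_sub_inner_le (ha i₀) hnw' (hp i₀))
      (abs_sub_inner_le (ha i₀) hnw (hp i₀))).trans (by
        rw [abs_sub_comm]; gcongr; exact abs_sub_inner_sub_sub_inner_le _ w w' (hp i₀))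
  have h₂ : (a' i₀ - ⟪w, p' i₀⟫) ^ 2 - (a' i₀ - ⟪w', p' i₀⟫) ^ 2 ≤ 2 * B * δ :=
    (sq_sub_sq_le_of_abs_le (abs_sub_inner_le (ha' i₀) hnw (hp' i₀))
      (abs_sub_inner_le (ha' i₀) hnw' (hp' i₀))).trans (by
        gcongr; exact abs_sub_inner_sub_sub_inner_le _ w w' (hp' i₀))
  have hdiff : lam / 2 * δ ^ 2 ≤ (1 / n) * (4 * B * δ) :=
    calc lam / 2 * δ ^ 2
        ≤ (krrLoss lam a p w' - krrLoss lam a' p' w') -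
            (krrLoss lam a p w - krrLoss lam a' p' w) := by
          linarith
      _ ≤ (1 / n) * (4 * B * δ) := by
          rw [krrLoss_sub_krrLoss_of_eq_of_ne hne, krrLoss_sub_krrLoss_of_eq_of_ne hne, ← mul_sub]
          gcongr
          linarith
  rcases (show 0 ≤ δ from norm_nonneg _).eq_or_lt with h0 | hpos
  · rw [← h0]; positivity
  · rw [one_div_mul_eq_div, le_div_iff₀ hn] at hdiff
    rw [le_div_iff₀ (by positivity)]
    nlinarith

theorem sum_abs_krr_residual_sub_le (hlam : 0 < lam)
    (ha : ∀ i, |a i| ≤ 1) (ha' : ∀ i, |a' i| ≤ 1)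
    (hp : ∀ i, ‖p i‖ ≤ 1) (hp' : ∀ i, ‖p' i‖ ≤ 1)
    (hne : ∀ i, i ≠ i₀ → a i = a' i ∧ p i = p' i)
    (hw : ∀ v, krrLoss lam a p w ≤ krrLoss lam a p v)
    (hw' : ∀ v, krrLoss lam a' p' w' ≤ krrLoss lam a' p' v) :
    ∑ i, |(a i - ⟪w, p i⟫) - (a' i - ⟪w', p' i⟫)| ≤
      2 * (1 + √2 / √lam) * (1 + 4 / lam) := by
  have hn : (n : ℝ) ≠ 0 := by exact_mod_cast i₀.pos.ne'
  have hnw := norm_le_of_krrLoss_le_krrLoss_zero hlam ha (hw 0)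
  have hnw' := norm_le_of_krrLoss_le_krrLoss_zero hlam ha' (hw' 0)
  have hδ := norm_sub_le_of_krr_neighbors hlam ha ha' hp hp' hne hw hw'
  have h₀ : |(a i₀ - ⟪w, p i₀⟫) - (a' i₀ - ⟪w', p' i₀⟫)| ≤ 2 * (1 + √2 / √lam) :=
    (abs_sub _ _).trans (by
      linarith [abs_sub_inner_le (ha i₀) hnw (hp i₀), abs_sub_inner_le (ha' i₀) hnw' (hp' i₀)])
  have h : ∀ i, i ≠ i₀ → |(a i - ⟪w, p i⟫) - (a' i - ⟪w', p' i⟫)| ≤ ‖w - w'‖ := fun i hi => by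
    rw [← (hne i hi).1, ← (hne i hi).2]
    exact abs_sub_inner_sub_sub_inner_le _ w w' (hp i)
  calc _ ≤ 2 * (1 + √2 / √lam) + n * (8 * (1 + √2 / √lam) / (lam * n)) := by
        simpa using
          Fintype.sum_le_add_card_mul i₀ (by positivity) h₀ fun i hi => (h i hi).trans hδ
    _ = 2 * (1 + √2 / √lam) * (1 + 4 / lam) := by field_simp; ring

end KRR

theorem krr_residual_products_sensitivity_general
    {H : Type*} [NormedAddCommGroup H] [InnerProductSpace ℝ H]
    {d n : ℕ}
    (lam : ℝ) (hlam : 0 < lam)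
    (φ : EuclideanSpace ℝ (Fin d) → H) (hφ : ∀ z, ‖φ z‖ ≤ 1)
    (x y x' y' : Fin n → ℝ) (z z' : Fin n → EuclideanSpace ℝ (Fin d))
    (hx : ∀ i, |x i| ≤ 1) (hy : ∀ i, |y i| ≤ 1)
    (hx' : ∀ i, |x' i| ≤ 1) (hy' : ∀ i, |y' i| ≤ 1)
    (hneighbor : ∃ i₀ : Fin n, ∀ i, i ≠ i₀ → x i = x' i ∧ y i = y' i ∧ z i = z' i)
    (wX wY wX' wY' : H)
    (hwX : ∀ v : H,
      lam / 2 * ‖wX‖ ^ 2 + (1 / n) * ∑ i, (x i - ⟪wX, φ (z i)⟫) ^ 2 ≤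
        lam / 2 * ‖v‖ ^ 2 + (1 / n) * ∑ i, (x i - ⟪v, φ (z i)⟫) ^ 2)
    (hwY : ∀ v : H,
      lam / 2 * ‖wY‖ ^ 2 + (1 / n) * ∑ i, (y i - ⟪wY, φ (z i)⟫) ^ 2 ≤
        lam / 2 * ‖v‖ ^ 2 + (1 / n) * ∑ i, (y i - ⟪v, φ (z i)⟫) ^ 2)
    (hwX' : ∀ v : H,
      lam / 2 * ‖wX'‖ ^ 2 + (1 / n) * ∑ i, (x' i - ⟪wX', φ (z' i)⟫) ^ 2 ≤
        lam / 2 * ‖v‖ ^ 2 + (1 / n) * ∑ i, (x' i - ⟪v, φ (z' i)⟫) ^ 2)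
    (hwY' : ∀ v : H,
      lam / 2 * ‖wY'‖ ^ 2 + (1 / n) * ∑ i, (y' i - ⟪wY', φ (z' i)⟫) ^ 2 ≤
        lam / 2 * ‖v‖ ^ 2 + (1 / n) * ∑ i, (y' i - ⟪v, φ (z' i)⟫) ^ 2) :
    ∑ i, |(x i - ⟪wX, φ (z i)⟫) * (y i - ⟪wY, φ (z i)⟫) -
          (x' i - ⟪wX', φ (z' i)⟫) * (y' i - ⟪wY', φ (z' i)⟫)| ≤
      4 * (1 + Real.sqrt 2 / Real.sqrt lam) *
        (1 + Real.sqrt 2 / Real.sqrt lam + 4 * Real.sqrt 2 / lam ^ ((3 : ℝ) / 2) + 4 / lam) := by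
  obtain ⟨i₀, hne⟩ := hneighbor
  have hp : ∀ i, ‖φ (z i)‖ ≤ 1 := fun i => hφ _
  have hp' : ∀ i, ‖φ (z' i)‖ ≤ 1 := fun i => hφ _
  have hSX := sum_abs_krr_residual_sub_le (p := fun i => φ (z i)) (p' := fun i => φ (z' i))
    hlam hx hx' hp hp' (fun i hi => ⟨(hne i hi).1, congrArg φ (hne i hi).2.2⟩) hwX hwX'
  have hSY := sum_abs_krr_residual_sub_le (p := fun i => φ (z i)) (p' := fun i => φ (z' i))
    hlam hy hy' hp hp' (fun i hi => ⟨(hne i hi).2.1, congrArg φ (hne i hi).2.2⟩) hwY hwY'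
  have hRX (i : Fin n) :=
    abs_sub_inner_le (hx i) (norm_le_of_krrLoss_le_krrLoss_zero hlam hx (hwX 0)) (hp i)
  have hRY' (i : Fin n) :=
    abs_sub_inner_le (hy' i) (norm_le_of_krrLoss_le_krrLoss_zero hlam hy' (hwY' 0)) (hp' i)
  calc _ ≤ ∑ i, (1 + √2 / √lam) * (|(x i - ⟪wX, φ (z i)⟫) - (x' i - ⟪wX', φ (z' i)⟫)| +
          |(y i - ⟪wY, φ (z i)⟫) - (y' i - ⟪wY', φ (z' i)⟫)|) :=
        sum_le_sum fun i _ => abs_mul_sub_mul_le (hRX i) (hRY' i)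
    _ ≤ (1 + √2 / √lam) * (2 * (2 * (1 + √2 / √lam) * (1 + 4 / lam))) := by
        rw [← mul_sum, sum_add_distrib]
        gcongr
        linarith
    _ = _ := by rw [← one_add_sqrt_two_div_sqrt_mul hlam]; ring

/-- **Sensitivity of KRR residual products** (Lemma on sensitivity of residual products).
For neighboring datasets `D = (x_i, y_i, z_i)` and `D' = (x'_i, y'_i, z'_i)` of size `n`
with all `|x_i|, |y_i|, |x'_i|, |y'_i| ≤ 1`, if `w_X, w_Y` (resp. `w'_X, w'_Y`) are KRR
minimizers with regularization `λ` for fitting `x` to `z` and `y` to `z` (resp. for `D'`),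
then the ℓ1 distance between the vectors of residual products
`R_i = (x_i − ⟨w_X, φ(z_i)⟩)(y_i − ⟨w_Y, φ(z_i)⟩)` satisfies
`Σ_i |R_i − R'_i| ≤ 4(1 + √2/√λ)(1 + √2/√λ + 4√2/λ^{3/2} + 4/λ)`. -/
theorem krr_residual_products_sensitivity
    {H : Type*} [NormedAddCommGroup H] [InnerProductSpace ℝ H] [CompleteSpace H]
    {d n : ℕ} (hn : 0 < n)
    (lam : ℝ) (hlam : 0 < lam)
    (φ : EuclideanSpace ℝ (Fin d) → H) (hφ : ∀ z, ‖φ z‖ ≤ 1)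
    (x y x' y' : Fin n → ℝ) (z z' : Fin n → EuclideanSpace ℝ (Fin d))
    (hx : ∀ i, |x i| ≤ 1) (hy : ∀ i, |y i| ≤ 1)
    (hx' : ∀ i, |x' i| ≤ 1) (hy' : ∀ i, |y' i| ≤ 1)
    (hneighbor : ∃ i₀ : Fin n, ∀ i, i ≠ i₀ → x i = x' i ∧ y i = y' i ∧ z i = z' i)
    (wX wY wX' wY' : H)
    (hwX : ∀ v : H,
      lam / 2 * ‖wX‖ ^ 2 + (1 / n) * ∑ i, (x i - ⟪wX, φ (z i)⟫) ^ 2 ≤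
        lam / 2 * ‖v‖ ^ 2 + (1 / n) * ∑ i, (x i - ⟪v, φ (z i)⟫) ^ 2)
    (hwY : ∀ v : H,
      lam / 2 * ‖wY‖ ^ 2 + (1 / n) * ∑ i, (y i - ⟪wY, φ (z i)⟫) ^ 2 ≤
        lam / 2 * ‖v‖ ^ 2 + (1 / n) * ∑ i, (y i - ⟪v, φ (z i)⟫) ^ 2)
    (hwX' : ∀ v : H,
      lam / 2 * ‖wX'‖ ^ 2 + (1 / n) * ∑ i, (x' i - ⟪wX', φ (z' i)⟫) ^ 2 ≤
        lam / 2 * ‖v‖ ^ 2 + (1 / n) * ∑ i, (x' i - ⟪v, φ (z' i)⟫) ^ 2)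
    (hwY' : ∀ v : H,
      lam / 2 * ‖wY'‖ ^ 2 + (1 / n) * ∑ i, (y' i - ⟪wY', φ (z' i)⟫) ^ 2 ≤
        lam / 2 * ‖v‖ ^ 2 + (1 / n) * ∑ i, (y' i - ⟪v, φ (z' i)⟫) ^ 2) :
    ∑ i, |(x i - ⟪wX, φ (z i)⟫) * (y i - ⟪wY, φ (z i)⟫) -
          (x' i - ⟪wX', φ (z' i)⟫) * (y' i - ⟪wY', φ (z' i)⟫)| ≤
      4 * (1 + Real.sqrt 2 / Real.sqrt lam) *
        (1 + Real.sqrt 2 / Real.sqrt lam + 4 * Real.sqrt 2 / lam ^ ((3 : ℝ) / 2) + 4 / lam) :=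
  krr_residual_products_sensitivity_general lam hlam φ hφ x y x' y' z z' hx hy hx' hy' hneighbor wX
    wY wX' wY' hwX hwY hwX' hwY'
end

section
/- Under the setup and assumptions of the power theorem for the private GCM (P absolutely continuous, σ_P = √(Var_P(χ_P ξ_P)) < ∞, A_f·A_g = o_P(n^{-1}), B_f = o_P(1), B_g = o_P(1), with T^{(n)} the GCM statistic computed on the Laplace-noised rescaled residual products and satisfying lim_{n→∞} sup_{t∈ℝ} |Pr[T^{(n)} − √n·ρ_P/σ'_P ≤ t] − Φ(t)| = 0 for σ'_P = √(σ_P² + 2(abΔ/ε)²)), if ρ_P = E_P[Cov(X,Y | Z)] ≠ 0, then the private GCM test has asymptotic power 1: for every M > 0, Pr[|T^{(n)}| > M] → 1 as n → ∞. -/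
/-!
With `c n = √n ρ_P / σ'_P`, the statistic `T n - c n` is uniformly close in CDF to `N(0,1)`,
say within `e n → 0`. Hence `Pr[T n > M] ≥ 1 - Φ(M - c n) - e n` and
`Pr[T n ≤ -M - 1] ≥ Φ(-M - 1 - c n) - e n`, and both events lie in `{|T n| > M}`.
Since `ρ_P ≠ 0` and `σ'_P > 0`, `c n` escapes every compact set, so at least one of the two lower
bounds tends to `1`.
-/

open MeasureTheory ProbabilityTheory Filter

/-- The sample space of one observation `(X, Y, Z) ∈ ℝ × ℝ × ℝ^d`. -/
abbrev Obs (d : ℕ) := ℝ × ℝ × EuclideanSpace ℝ (Fin d)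

/-- The σ-algebra generated by the `Z`-coordinate. -/
def mZ (d : ℕ) : MeasurableSpace (Obs d) :=
  MeasurableSpace.comap (fun ω => ω.2.2) inferInstance

lemma mZ_le (d : ℕ) : mZ d ≤ (inferInstance : MeasurableSpace (Obs d)) :=
  Measurable.comap_le measurable_snd.snd

/-- Rescaling of one observation: `(x, y, z) ↦ (x/a, y/b, z)`. -/
noncomputable def rescale {d : ℕ} (a b : ℝ) (ω : Obs d) : Obs d :=
  (ω.1 / a, ω.2.1 / b, ω.2.2)

/-- CDF of the standard Gaussian distribution `N(0,1)`. -/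
noncomputable def stdGaussianCDF (t : ℝ) : ℝ :=
  ((gaussianReal 0 1) (Set.Iic t)).toReal

/-- The indices of the second (evaluation) half of a sample of size `n`. -/
def evalHalf (n : ℕ) : Finset (Fin n) := Finset.univ.filter fun i => n / 2 ≤ (i : ℕ)

/-- The GCM test statistic computed on the residual products indexed by `J`. -/
noncomputable def gcmStatOn {n : ℕ} (J : Finset (Fin n)) (R : Fin n → ℝ) : ℝ :=
  ((∑ i ∈ J, R i) / Real.sqrt J.card) /
    Real.sqrt ((∑ i ∈ J, R i ^ 2) / J.card - ((∑ i ∈ J, R i) / J.card) ^ 2)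

open Topology

section
variable {Ω : Type*} [MeasurableSpace Ω] (μ : Measure Ω) [IsProbabilityMeasure μ]

-- The statistic is not assumed measurable, so only subadditivity of the outer measure is available.
lemma one_sub_measureReal_le_measureReal_compl (s : Set Ω) : 1 - μ.real s ≤ μ.real sᶜ := by
  have h := ENNReal.toReal_mono (by finiteness) (measure_univ_le_add_compl (μ := μ) s)
  rw [measure_univ, ENNReal.toReal_add (by finiteness) (by finiteness)] at h
  simp only [ENNReal.toReal_one] at h
  rw [measureReal_def, measureReal_def]
  linarith

lemma max_sub_le_measureReal_lt_abs (T : Ω → ℝ) (F : ℝ → ℝ) (c e M : ℝ)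
    (h : ∀ t, |μ.real {ω | T ω - c ≤ t} - F t| ≤ e) :
    max (1 - F (M - c)) (F (-M - 1 - c)) - e ≤ μ.real {ω | M < |T ω|} := by
  rw [sub_le_iff_le_add, max_le_iff]
  constructor
  · have hcompl : {ω | T ω - c ≤ M - c}ᶜ ⊆ {ω | M < |T ω|} := fun ω hω => by
      simp only [Set.mem_compl_iff, Set.mem_ofPred_eq, not_le, sub_lt_sub_iff_right] at hω ⊢
      exact hω.trans_le (le_abs_self _)
    have := (abs_sub_le_iff.mp (h (M - c))).1
    linarith [one_sub_measureReal_le_measureReal_compl μ {ω | T ω - c ≤ M - c},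
      measureReal_mono (μ := μ) hcompl]
  · have hlow : {ω | T ω - c ≤ -M - 1 - c} ⊆ {ω | M < |T ω|} := fun ω hω => by
      simp only [Set.mem_ofPred_eq, sub_le_sub_iff_right] at hω ⊢
      linarith [neg_le_abs (T ω)]
    have := (abs_sub_le_iff.mp (h (-M - 1 - c))).2
    linarith [measureReal_mono (μ := μ) hlow]

lemma abs_measureReal_sub_cdf_le_iSup (ν : Measure ℝ) [IsProbabilityMeasure ν] (S : ℝ → Set Ω)
    (t : ℝ) : |μ.real (S t) - cdf ν t| ≤ ⨆ s, |μ.real (S s) - cdf ν s| := by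
  refine le_ciSup (f := fun s => |μ.real (S s) - cdf ν s|) ⟨1, ?_⟩ t
  rintro _ ⟨s, rfl⟩
  exact abs_sub_le_of_nonneg_of_le measureReal_nonneg measureReal_le_one (cdf_nonneg ν s)
    (cdf_le_one ν s)

end

lemma tendsto_max_one_sub_cdf_cocompact (ν : Measure ℝ) [IsProbabilityMeasure ν] (s t : ℝ) :
    Tendsto (fun x => max (1 - cdf ν (s - x)) (cdf ν (t - x))) (cocompact ℝ) (𝓝 1) := by
  have hbot : ∀ r : ℝ, Tendsto (fun x => r - x) atTop atBot := fun r =>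
    tendsto_atBot_add_const_left _ r tendsto_neg_atTop_atBot
  have htop : ∀ r : ℝ, Tendsto (fun x => r - x) atBot atTop := fun r =>
    tendsto_atTop_add_const_left _ r tendsto_neg_atBot_atTop
  rw [cocompact_eq_atBot_atTop, tendsto_sup]
  constructor
  · simpa using ((tendsto_cdf_atTop ν).comp (htop s)).const_sub 1 |>.max
      ((tendsto_cdf_atTop ν).comp (htop t))
  · simpa using ((tendsto_cdf_atBot ν).comp (hbot s)).const_sub 1 |>.max
      ((tendsto_cdf_atBot ν).comp (hbot t))

lemma tendsto_measure_lt_abs_of_tendsto_iSup_abs_sub_cdf {ι : Type*} {l : Filter ι}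
    {Ω : ι → Type*} [∀ i, MeasurableSpace (Ω i)] (μ : ∀ i, Measure (Ω i))
    [∀ i, IsProbabilityMeasure (μ i)] (T : ∀ i, Ω i → ℝ) {c : ι → ℝ}
    (hc : Tendsto c l (cocompact ℝ)) (ν : Measure ℝ) [IsProbabilityMeasure ν]
    (hconv : Tendsto (fun i => ⨆ t, |(μ i).real {ω | T i ω - c i ≤ t} - cdf ν t|) l (𝓝 0))
    (M : ℝ) :
    Tendsto (fun i => μ i {ω | M < |T i ω|}) l (𝓝 1) := by
  have hlower : Tendsto (fun i => max (1 - cdf ν (M - c i)) (cdf ν (-M - 1 - c i)) -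
      ⨆ t, |(μ i).real {ω | T i ω - c i ≤ t} - cdf ν t|) l (𝓝 1) := by
    simpa using ((tendsto_max_one_sub_cdf_cocompact ν M (-M - 1)).comp hc).sub hconv
  have hreal : Tendsto (fun i => (μ i).real {ω | M < |T i ω|}) l (𝓝 1) :=
    tendsto_of_tendsto_of_tendsto_of_le_of_le hlower tendsto_const_nhds
      (fun i => max_sub_le_measureReal_lt_abs _ _ _ _ _ _
        (abs_measureReal_sub_cdf_le_iSup _ _ (fun t => {ω | T i ω - c i ≤ t})))
      (fun i => measureReal_le_one)
  simp only [measureReal_def] at hreal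
  rwa [← ENNReal.toReal_one,
    ENNReal.tendsto_toReal_iff (fun i => by finiteness) ENNReal.one_ne_top] at hreal

lemma tendsto_sqrt_natCast_mul_cocompact {k : ℝ} (hk : k ≠ 0) :
    Tendsto (fun n : ℕ => √n * k) atTop (cocompact ℝ) := by
  have hsqrt : Tendsto (fun n : ℕ => √n) atTop (cocompact ℝ) :=
    atTop_le_cocompact.trans' <| Real.tendsto_sqrt_atTop.comp tendsto_natCast_atTop_atTop
  have hmul : Tendsto (k * ·) (cocompact ℝ) (cocompact ℝ) :=
    (Homeomorph.mulLeft₀ k hk).map_cocompact.le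
  exact (hmul.comp hsqrt).congr fun n => mul_comm _ _

lemma stdGaussianCDF_eq_cdf : stdGaussianCDF = cdf (gaussianReal 0 1) := by
  ext t
  rw [stdGaussianCDF, cdf_eq_real, measureReal_def]

theorem private_gcm_power_one_general
    {d : ℕ} (P : Measure (Obs d)) [IsProbabilityMeasure P]
    (a b : ℝ) (ha : 0 < a) (hb : 0 < b)
    -- signal and noise of the true residuals
    (ρP σP : ℝ)
    -- residual products (used on the second half of the sample)
    (R : (n : ℕ) → (Fin n → Obs d) → Fin n → ℝ)
    -- i.i.d. Laplace noise of scale Δ/ε, independent of the data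
    (Δ ε : ℝ) (hΔ : 0 < Δ) (hε : 0 < ε)
    (ν : Measure ℝ) [IsProbabilityMeasure ν]
    (σP' : ℝ) (hσP' : σP' = Real.sqrt (σP ^ 2 + 2 * (a * b * Δ / ε) ^ 2)) :
    -- the conclusion of the power theorem, as a hypothesis
    ∀ hconv : Tendsto
      (fun n : ℕ => ⨆ t : ℝ,
        |(((Measure.pi fun _ : Fin n => P).prod (Measure.pi fun _ : Fin n => ν))
            {sw : (Fin n → Obs d) × (Fin n → ℝ) |
              gcmStatOn (evalHalf n) (fun i => R n sw.1 i + sw.2 i) -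
                Real.sqrt n * ρP / σP' ≤ t}).toReal -
          stdGaussianCDF t|)
      atTop (nhds 0),
    -- nonzero signal
    ρP ≠ 0 →
    -- asymptotic power 1
    ∀ M : ℝ, 0 < M →
      Tendsto
        (fun n : ℕ =>
          ((Measure.pi fun _ : Fin n => P).prod (Measure.pi fun _ : Fin n => ν))
            {sw : (Fin n → Obs d) × (Fin n → ℝ) |
              M < |gcmStatOn (evalHalf n) (fun i => R n sw.1 i + sw.2 i)|})
        atTop (nhds 1) := by
  intro hconv hρ M _
  have hσP'_pos : 0 < σP' := by rw [hσP']; positivity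
  have hc : Tendsto (fun n : ℕ => Real.sqrt n * ρP / σP') atTop (cocompact ℝ) := by
    simpa only [mul_div_assoc] using
      tendsto_sqrt_natCast_mul_cocompact (div_ne_zero hρ hσP'_pos.ne')
  rw [stdGaussianCDF_eq_cdf] at hconv
  exact tendsto_measure_lt_abs_of_tendsto_iSup_abs_sub_cdf _
    (fun n (sw : (Fin n → Obs d) × (Fin n → ℝ)) =>
      gcmStatOn (evalHalf n) (fun i => R n sw.1 i + sw.2 i)) hc _ hconv M

/-- **Asymptotic power 1 of the private GCM** (Corollary 8).
Under the setup and assumptions of the power theorem for the private GCM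
(absolutely continuous `P`, `σ_P = √Var_P(χ_P ξ_P) < ∞`, good-fit conditions
`A_f A_g = o_P(n⁻¹)`, `B_f = o_P(1)`, `B_g = o_P(1)`, sample splitting, Laplace
noise), given that the recentered statistic `T⁽ⁿ⁾ − √n ρ_P/σ'_P` converges in
distribution to `N(0,1)` (with `σ'_P = √(σ_P² + 2(abΔ/ε)²)`), if
`ρ_P = E_P[Cov(X,Y|Z)] ≠ 0` then for every `M > 0`,
`Pr[|T⁽ⁿ⁾| > M] → 1` as `n → ∞`. -/
theorem private_gcm_power_one
    {d : ℕ} (P : Measure (Obs d)) [IsProbabilityMeasure P]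
    (habs : P ≪ volume)
    (a b : ℝ) (ha : 0 < a) (hb : 0 < b)
    (hXa : ∀ᵐ ω ∂P, |ω.1| ≤ a) (hYb : ∀ᵐ ω ∂P, |ω.2.1| ≤ b)
    (fP gP uP vP : EuclideanSpace ℝ (Fin d) → ℝ)
    (hfP : P[fun ω : Obs d => ω.1 | mZ d] =ᵐ[P] fun ω => fP ω.2.2)
    (hgP : P[fun ω : Obs d => ω.2.1 | mZ d] =ᵐ[P] fun ω => gP ω.2.2)
    (huP : P[fun ω : Obs d => (ω.1 - fP ω.2.2) ^ 2 | mZ d] =ᵐ[P] fun ω => uP ω.2.2)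
    (hvP : P[fun ω : Obs d => (ω.2.1 - gP ω.2.2) ^ 2 | mZ d] =ᵐ[P] fun ω => vP ω.2.2)
    -- σ_P < ∞ : the true residual product is square-integrable
    (hL2 : MemLp (fun ω : Obs d => (ω.1 - fP ω.2.2) * (ω.2.1 - gP ω.2.2)) 2 P)
    -- signal and noise of the true residuals
    (ρP σP : ℝ)
    (hρP : ρP = ∫ ω, (ω.1 - fP ω.2.2) * (ω.2.1 - gP ω.2.2) ∂P)
    (hσP : σP = Real.sqrt
      (variance (fun ω : Obs d => (ω.1 - fP ω.2.2) * (ω.2.1 - gP ω.2.2)) P))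
    -- estimators fit on the first half of the (rescaled) sample
    (fhat ghat : (n : ℕ) → (Fin n → Obs d) → EuclideanSpace ℝ (Fin d) → ℝ)
    (hfsplit : ∀ n (s s' : Fin n → Obs d),
      (∀ i : Fin n, (i : ℕ) < n / 2 → s i = s' i) → fhat n s = fhat n s')
    (hgsplit : ∀ n (s s' : Fin n → Obs d),
      (∀ i : Fin n, (i : ℕ) < n / 2 → s i = s' i) → ghat n s = ghat n s')
    -- residual products (used on the second half of the sample)
    (R : (n : ℕ) → (Fin n → Obs d) → Fin n → ℝ)
    (hR : ∀ n s i, R n s i =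
      ((s i).1 / a - fhat n (fun j => rescale a b (s j)) (s i).2.2) *
        ((s i).2.1 / b - ghat n (fun j => rescale a b (s j)) (s i).2.2))
    -- error terms of the fitting procedure over the evaluation half
    (Af Ag Bf Bg : (n : ℕ) → (Fin n → Obs d) → ℝ)
    (hAf : ∀ n s, Af n s = (1 / (evalHalf n).card) * ∑ i ∈ evalHalf n,
      (fP (s i).2.2 / a - fhat n (fun j => rescale a b (s j)) (s i).2.2) ^ 2)
    (hAg : ∀ n s, Ag n s = (1 / (evalHalf n).card) * ∑ i ∈ evalHalf n,
      (gP (s i).2.2 / b - ghat n (fun j => rescale a b (s j)) (s i).2.2) ^ 2)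
    (hBf : ∀ n s, Bf n s = (1 / (evalHalf n).card) * ∑ i ∈ evalHalf n,
      (fP (s i).2.2 / a - fhat n (fun j => rescale a b (s j)) (s i).2.2) ^ 2 *
        (vP (s i).2.2 / b ^ 2))
    (hBg : ∀ n s, Bg n s = (1 / (evalHalf n).card) * ∑ i ∈ evalHalf n,
      (gP (s i).2.2 / b - ghat n (fun j => rescale a b (s j)) (s i).2.2) ^ 2 *
        (uP (s i).2.2 / a ^ 2))
    -- good-fit assumptions: A_f A_g = o_P(n⁻¹), B_f = o_P(1), B_g = o_P(1)
    (hAfAg : ∀ δ : ℝ, 0 < δ → Tendsto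
      (fun n => (Measure.pi fun _ : Fin n => P) {s | δ < (n : ℝ) * |Af n s * Ag n s|})
      atTop (nhds 0))
    (hBfo : ∀ δ : ℝ, 0 < δ → Tendsto
      (fun n => (Measure.pi fun _ : Fin n => P) {s | δ < |Bf n s|}) atTop (nhds 0))
    (hBgo : ∀ δ : ℝ, 0 < δ → Tendsto
      (fun n => (Measure.pi fun _ : Fin n => P) {s | δ < |Bg n s|}) atTop (nhds 0))
    -- i.i.d. Laplace noise of scale Δ/ε, independent of the data
    (Δ ε : ℝ) (hΔ : 0 < Δ) (hε : 0 < ε)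
    (ν : Measure ℝ) [IsProbabilityMeasure ν]
    (hν : ν = volume.withDensity
      (fun w => ENNReal.ofReal ((2 * (Δ / ε))⁻¹ * Real.exp (-|w| / (Δ / ε)))))
    (σP' : ℝ) (hσP' : σP' = Real.sqrt (σP ^ 2 + 2 * (a * b * Δ / ε) ^ 2)) :
    -- the conclusion of the power theorem, as a hypothesis
    ∀ hconv : Tendsto
      (fun n : ℕ => ⨆ t : ℝ,
        |(((Measure.pi fun _ : Fin n => P).prod (Measure.pi fun _ : Fin n => ν))
            {sw : (Fin n → Obs d) × (Fin n → ℝ) |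
              gcmStatOn (evalHalf n) (fun i => R n sw.1 i + sw.2 i) -
                Real.sqrt n * ρP / σP' ≤ t}).toReal -
          stdGaussianCDF t|)
      atTop (nhds 0),
    -- nonzero signal
    ρP ≠ 0 →
    -- asymptotic power 1
    ∀ M : ℝ, 0 < M →
      Tendsto
        (fun n : ℕ =>
          ((Measure.pi fun _ : Fin n => P).prod (Measure.pi fun _ : Fin n => ν))
            {sw : (Fin n → Obs d) × (Fin n → ℝ) |
              M < |gcmStatOn (evalHalf n) (fun i => R n sw.1 i + sw.2 i)|})
        atTop (nhds 1) :=
  private_gcm_power_one_general P a b ha hb ρP σP R Δ ε hΔ hε ν σP' hσP'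
end

section
/- Let ε > 0 and B ≥ 1, and let s = (s_1,…,s_B) and s' = (s'_1,…,s'_B) be real score vectors with |s_i − s'_i| ≤ 1 for all i ∈ [B]. Let Z_1,…,Z_B be i.i.d. exponential random variables with density (ε/2)·exp(−εz/2) on z ≥ 0 (i.e., scale 2/ε). Then for every i ∈ [B], Pr[ s_i + Z_i > s_j + Z_j for all j ≠ i ] ≤ exp(ε) · Pr[ s'_i + Z_i > s'_j + Z_j for all j ≠ i ]. -/
/-!
Condition on every noise coordinate except the `i`-th. Since each score moves by at most 1,
raising `Z i` by 2 turns a win of `i` under the scores `s` into a win under `s'`, so the section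
of the first event lies in the preimage of the section of the second under `x ↦ x + 2`. A shift
by 2 changes the exponential density of rate `ε / 2` by a factor of at most `exp ε`.
-/

open MeasureTheory ProbabilityTheory

namespace MeasureTheory.Measure

variable {n : ℕ} {α : Fin (n + 1) → Type*} [∀ j, MeasurableSpace (α j)]
  (μ : ∀ j, Measure (α j)) [∀ j, SigmaFinite (μ j)] (i : Fin (n + 1))

theorem pi_eq_lintegral_insertNth {A : Set (∀ j, α j)} (hA : MeasurableSet A) :
    Measure.pi μ A =
      ∫⁻ w, μ i {x | i.insertNth x w ∈ A} ∂Measure.pi fun j => μ (i.succAbove j) := by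
  have he := (measurePreserving_piFinSuccAbove μ i).symm
  rw [← he.measure_preimage_equiv, prod_apply_symm (hA.preimage he.measurable)]
  rfl

theorem pi_le_mul_of_forall_insertNth_le {A A' : Set (∀ j, α j)} (hA : MeasurableSet A)
    (hA' : MeasurableSet A') {C : ENNReal} (hC : C ≠ ⊤)
    (h : ∀ w, μ i {x | i.insertNth x w ∈ A} ≤ C * μ i {x | i.insertNth x w ∈ A'}) :
    Measure.pi μ A ≤ C * Measure.pi μ A' := by
  rw [pi_eq_lintegral_insertNth μ i hA, pi_eq_lintegral_insertNth μ i hA',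
    ← lintegral_const_mul' _ _ hC]
  exact lintegral_mono h

end MeasureTheory.Measure

theorem ProbabilityTheory.exponentialPDF_sub_le (r : ℝ) {c : ℝ} (hc : 0 ≤ c) (y : ℝ) :
    exponentialPDF r (y - c) ≤ ENNReal.ofReal (Real.exp (r * c)) * exponentialPDF r y := by
  rcases lt_or_ge y c with hy | hy
  · simp [exponentialPDF_of_neg (sub_neg.mpr hy)]
  rw [exponentialPDF_of_nonneg (sub_nonneg.mpr hy), exponentialPDF_of_nonneg (hc.trans hy),
    ← ENNReal.ofReal_mul (Real.exp_nonneg _), mul_left_comm, ← Real.exp_add,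
    show r * c + -(r * y) = -(r * (y - c)) by ring]

theorem ProbabilityTheory.expMeasure_preimage_add_le (r : ℝ) {c : ℝ} (hc : 0 ≤ c) (T : Set ℝ) :
    expMeasure r ((· + c) ⁻¹' T) ≤ ENNReal.ofReal (Real.exp (r * c)) * expMeasure r T := by
  have htrans := (measurePreserving_add_right volume c).setLIntegral_comp_preimage_emb
    (measurableEmbedding_addRight c) (fun y => exponentialPDF r (y - c)) T
  simp only [add_sub_cancel_right] at htrans
  calc expMeasure r ((· + c) ⁻¹' T)
      = ∫⁻ y in T, exponentialPDF r (y - c) := by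
        rw [← htrans]; exact withDensity_apply' _ _
    _ ≤ ∫⁻ y in T, ENNReal.ofReal (Real.exp (r * c)) * exponentialPDF r y :=
        lintegral_mono fun y => exponentialPDF_sub_le r hc y
    _ = ENNReal.ofReal (Real.exp (r * c)) * expMeasure r T := by
        rw [lintegral_const_mul' _ _ ENNReal.ofReal_ne_top]
        exact congrArg _ (withDensity_apply' _ _).symm

def noisyMaxEvent {B : ℕ} (s : Fin B → ℝ) (i : Fin B) : Set (Fin B → ℝ) :=
  {Z | ∀ j, j ≠ i → s j + Z j < s i + Z i}

theorem measurableSet_noisyMaxEvent {B : ℕ} (s : Fin B → ℝ) (i : Fin B) :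
    MeasurableSet (noisyMaxEvent s i) := by
  have : noisyMaxEvent s i = ⋂ j, ⋂ _ : j ≠ i, {Z | s j + Z j < s i + Z i} := by
    ext Z; simp [noisyMaxEvent]
  rw [this]
  exact .iInter fun j => .iInter fun _ => measurableSet_lt (by fun_prop) (by fun_prop)

theorem insertNth_add_mem_noisyMaxEvent {n : ℕ} {s s' : Fin (n + 1) → ℝ} {Δ : ℝ}
    (hsens : ∀ j, |s j - s' j| ≤ Δ) {i : Fin (n + 1)} {x : ℝ} {w : Fin n → ℝ}
    (h : i.insertNth x w ∈ noisyMaxEvent s i) :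
    i.insertNth (x + 2 * Δ) w ∈ noisyMaxEvent s' i := by
  intro j hj
  obtain ⟨k, rfl⟩ := Fin.exists_succAbove_eq hj
  have hk := h _ hj
  simp only [Fin.insertNth_apply_succAbove, Fin.insertNth_apply_same] at hk ⊢
  linarith [abs_le.mp (hsens i), abs_le.mp (hsens (i.succAbove k))]

theorem report_noisy_max_dp_general
    (ε : ℝ) (B : ℕ)
    (s s' : Fin B → ℝ) (hsens : ∀ i, |s i - s' i| ≤ 1)
    (ν : Measure ℝ) [IsProbabilityMeasure ν]
    (hν : ν = ProbabilityTheory.expMeasure (ε / 2)) :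
    ∀ i : Fin B,
      (Measure.pi fun _ : Fin B => ν) {Z | ∀ j, j ≠ i → s j + Z j < s i + Z i} ≤
        ENNReal.ofReal (Real.exp ε) *
          (Measure.pi fun _ : Fin B => ν) {Z | ∀ j, j ≠ i → s' j + Z j < s' i + Z i} := by
  intro i
  obtain ⟨n, rfl⟩ := Nat.exists_eq_add_one_of_ne_zero i.pos.ne'
  have hshift : ∀ T, ν ((· + 2 * 1) ⁻¹' T) ≤ ENNReal.ofReal (Real.exp ε) * ν T := by
    intro T
    rw [hν]
    convert expMeasure_preimage_add_le (ε / 2) (by norm_num : (0 : ℝ) ≤ 2 * 1) T using 4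
    ring
  exact Measure.pi_le_mul_of_forall_insertNth_le _ i (measurableSet_noisyMaxEvent s i)
    (measurableSet_noisyMaxEvent s' i) ENNReal.ofReal_ne_top fun w =>
      (measure_mono fun x hx => insertNth_add_mem_noisyMaxEvent hsens hx).trans (hshift _)

/-- **Report Noisy Max is ε-differentially private.**
Let `s, s'` be score vectors of length `B` with `|s_i − s'_i| ≤ 1` for all `i`, and let
`Z_1,…,Z_B` be i.i.d. exponential with density `(ε/2) exp(−εz/2)` on `z ≥ 0` (scale `2/ε`).
Then for every index `i`,
`Pr[∀ j ≠ i, s_i + Z_i > s_j + Z_j] ≤ exp(ε) · Pr[∀ j ≠ i, s'_i + Z_i > s'_j + Z_j]`. -/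
theorem report_noisy_max_dp
    (ε : ℝ) (hε : 0 < ε) (B : ℕ) (hB : 1 ≤ B)
    (s s' : Fin B → ℝ) (hsens : ∀ i, |s i - s' i| ≤ 1)
    (ν : Measure ℝ) [IsProbabilityMeasure ν]
    (hν : ν = ProbabilityTheory.expMeasure (ε / 2)) :
    ∀ i : Fin B,
      (Measure.pi fun _ : Fin B => ν) {Z | ∀ j, j ≠ i → s j + Z j < s i + Z i} ≤
        ENNReal.ofReal (Real.exp ε) *
          (Measure.pi fun _ : Fin B => ν) {Z | ∀ j, j ≠ i → s' j + Z j < s' i + Z i} :=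
  report_noisy_max_dp_general ε B s s' hsens ν hν
end

section
/- Let T_0, T_1, …, T_m be real numbers, let Q_0 ≥ Q_1 ≥ … ≥ Q_m be their decreasing sort, let c* = #{ j ∈ {1,…,m} : T_j ≥ T_0 } be the rank of T_0, and for γ ≥ 0 let G_γ = #{ j ∈ {1,…,m} : |T_j − T_0| ≤ γ }. Then every rank c ∈ {0,…,m} satisfying |Q_c − T_0| ≤ γ obeys |c − c*| ≤ G_γ. -/
/-!
Write `v = Q_c`. Since `Q` is a decreasing rearrangement of `T`, at least `c + 1` of the `T_j`
are `≥ v` and at most `c` of them are `> v`. As `v` lies within `γ` of `T_0`, every `T_j ≥ v`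
with `j ≠ 0` is either `≥ T_0` or within `γ` of `T_0`, which gives `c ≤ c* + G_γ`; every
`T_j ≥ T_0` with `j ≠ 0` is either `> v` or within `γ` of `T_0`, which gives `c* ≤ c + G_γ`.
-/

open Finset

theorem Finset.card_filter_comp_perm {ι : Type*} [Fintype ι] (σ : Equiv.Perm ι)
    (p : ι → Prop) [DecidablePred p] : #{i | p (σ i)} = #{i | p i} :=
  card_equiv σ (by simp)

namespace Antitone

variable {n : ℕ} {β : Type*} [LinearOrder β] {Q : Fin n → β}

theorem val_add_one_le_card_filter_le (hQ : Antitone Q) (c : Fin n) :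
    (c : ℕ) + 1 ≤ #{i | Q c ≤ Q i} := by
  rw [← Fin.card_Iic c]
  exact card_le_card fun i hi => mem_filter.mpr ⟨mem_univ i, hQ (mem_Iic.mp hi)⟩

theorem card_filter_lt_le_val (hQ : Antitone Q) (c : Fin n) :
    #{i | Q c < Q i} ≤ c := by
  rw [← Fin.card_Iio c]
  refine card_le_card fun i hi => mem_Iio.mpr (lt_of_not_ge fun hci => ?_)
  exact (lt_of_lt_of_le (mem_filter.mp hi).2 (hQ hci)).false

end Antitone

section Rank

variable {ι α : Type*} [Fintype ι] [DecidableEq ι]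
  [AddCommGroup α] [LinearOrder α] [IsOrderedAddMonoid α] (T : ι → α) (i : ι) {v γ : α}

theorem card_filter_le_le_rank_add_card_near (hv : T i - γ ≤ v) :
    #{j | v ≤ T j} ≤
      #{j | j ≠ i ∧ T i ≤ T j} + #{j | j ≠ i ∧ |T j - T i| ≤ γ} + 1 := by
  have hsub : ({j | v ≤ T j} : Finset ι) ⊆
      insert i (({j | j ≠ i ∧ T i ≤ T j} : Finset ι) ∪
        ({j | j ≠ i ∧ |T j - T i| ≤ γ} : Finset ι)) := by
    intro j hj
    simp only [mem_filter, mem_univ, true_and, mem_insert, mem_union] at hj ⊢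
    by_cases hji : j = i
    · exact Or.inl hji
    by_cases hge : T i ≤ T j
    · exact Or.inr (Or.inl ⟨hji, hge⟩)
    · have hlt : T j < T i := lt_of_not_ge hge
      refine Or.inr (Or.inr ⟨hji, ?_⟩)
      rw [abs_sub_comm, abs_of_pos (sub_pos.mpr hlt)]
      exact sub_le_comm.mp (hv.trans hj)
  calc #{j | v ≤ T j} ≤ _ := card_le_card hsub
    _ ≤ _ := card_insert_le _ _
    _ ≤ _ := by grw [card_union_le]

theorem rank_le_card_filter_lt_add_card_near (hv : v ≤ T i + γ) :
    #{j | j ≠ i ∧ T i ≤ T j} ≤ #{j | v < T j} + #{j | j ≠ i ∧ |T j - T i| ≤ γ} := by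
  have hsub : ({j | j ≠ i ∧ T i ≤ T j} : Finset ι) ⊆
      ({j | v < T j} : Finset ι) ∪ ({j | j ≠ i ∧ |T j - T i| ≤ γ} : Finset ι) := by
    intro j hj
    simp only [mem_filter, mem_univ, true_and, mem_union] at hj ⊢
    by_cases hlt : v < T j
    · exact Or.inl hlt
    · refine Or.inr ⟨hj.1, ?_⟩
      rw [abs_of_nonneg (sub_nonneg.mpr hj.2)]
      exact sub_le_iff_le_add'.mpr ((not_lt.mp hlt).trans hv)
  exact (card_le_card hsub).trans (card_union_le _ _)

end Rank

theorem close_rank_of_close_value_general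
    {m : ℕ} (γ : ℝ)
    (T Q : Fin (m + 1) → ℝ)
    (hQanti : Antitone Q) (hQperm : ∃ σ : Equiv.Perm (Fin (m + 1)), Q = T ∘ σ) :
    ∀ c : Fin (m + 1), |Q c - T 0| ≤ γ →
      |(c : ℤ) - ((Finset.univ.filter (fun j : Fin (m + 1) => j ≠ 0 ∧ T 0 ≤ T j)).card : ℤ)| ≤
        ((Finset.univ.filter (fun j : Fin (m + 1) => j ≠ 0 ∧ |T j - T 0| ≤ γ)).card : ℤ) := by
  obtain ⟨σ, rfl⟩ := hQperm
  intro c hc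
  obtain ⟨hlo, hhi⟩ := abs_sub_le_iff.mp hc
  have hge : (c : ℕ) + 1 ≤ #{j | (T ∘ σ) c ≤ T j} := by
    rw [← card_filter_comp_perm σ]
    exact hQanti.val_add_one_le_card_filter_le c
  have hgt : #{j | (T ∘ σ) c < T j} ≤ c := by
    rw [← card_filter_comp_perm σ]
    exact hQanti.card_filter_lt_le_val c
  have h₁ := card_filter_le_le_rank_add_card_near T 0 (sub_le_comm.mp hhi)
  have h₂ := rank_le_card_filter_lt_add_card_near T 0 (sub_le_iff_le_add'.mp hlo)
  rw [abs_sub_le_iff]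
  constructor <;> omega

/-- **Ranks with close values approximate the true rank.**
Let `T_0,…,T_m` be reals with decreasing sort `Q` (an antitone rearrangement),
let `c* = #{j ∈ {1,…,m} : T_j ≥ T_0}` be the rank of `T_0`, and for `γ ≥ 0` let
`G_γ = #{j ∈ {1,…,m} : |T_j − T_0| ≤ γ}`. Then every rank `c ∈ {0,…,m}` with
`|Q_c − T_0| ≤ γ` satisfies `|c − c*| ≤ G_γ`. -/
theorem close_rank_of_close_value
    {m : ℕ} (γ : ℝ) (hγ : 0 ≤ γ)
    (T Q : Fin (m + 1) → ℝ)
    (hQanti : Antitone Q) (hQperm : ∃ σ : Equiv.Perm (Fin (m + 1)), Q = T ∘ σ) :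
    ∀ c : Fin (m + 1), |Q c - T 0| ≤ γ →
      |(c : ℤ) - ((Finset.univ.filter (fun j : Fin (m + 1) => j ≠ 0 ∧ T 0 ≤ T j)).card : ℤ)| ≤
        ((Finset.univ.filter (fun j : Fin (m + 1) => j ≠ 0 ∧ |T j - T 0| ≤ γ)).card : ℤ) :=
  close_rank_of_close_value_general γ T Q hQanti hQperm
end

section
/- Let ε > 0, Δ_T > 0, δ ∈ (0,1), m ≥ 1, and let T_0, T_1, …, T_m be real numbers with decreasing sort Q_0 ≥ … ≥ Q_m. Define scores s_c = −|Q_c − T_0|/(2Δ_T) for c ∈ {0,…,m}, let Z_0,…,Z_m be i.i.d. exponential random variables with density (ε/2)exp(−εz/2) on z ≥ 0, and let ĉ be an index maximizing s_c + Z_c. Let p̂ = (1+ĉ)/(m+1), let c* = #{ j ∈ {1,…,m} : T_j ≥ T_0 } with p* = (1+c*)/(m+1), and set γ = (4Δ_T/ε)·log(m/δ) and G_γ = #{ j ∈ {1,…,m} : |T_j − T_0| ≤ γ }. Then with probability at least 1 − δ over the noise, |p̂ − p*| ≤ G_γ/(m+1). -/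
open MeasureTheory ProbabilityTheory Finset

/-!
Let `i₀` be the sorted position of `T 0`, so that its score `s i₀ = 0` is the largest possible.
Outside an event of probability at most `δ`, the noise satisfies `Z i₀ ≥ 0` and
`Z c ≤ t := (2/ε) log (m/δ)` for the `m` other positions: each of these fails with probability
`exp (-ε t / 2) = δ / m`, and by independence the good event has probability
`(1 - δ/m)^m ≥ 1 - δ`. On that event the noisy maximiser `ĉ` has `s ĉ ≥ s i₀ + Z i₀ - Z ĉ ≥ -t`,
i.e. `|Q ĉ - T 0| ≤ γ`, and a sorted position whose value lies within `γ` of `T 0` differs from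
the true rank by at most the number `G_γ` of statistics in that window.
-/

section Rank

variable {α : Type*} [Preorder α] {n : ℕ} {T Q : Fin n → α} {σ : Equiv.Perm (Fin n)}

lemma Antitone.succ_le_card_filter_le [DecidableLE α] (hQ : Antitone Q) (hσ : Q = T ∘ σ) (c : Fin n) :
    (c : ℕ) + 1 ≤ #{j | Q c ≤ T j} := by
  rw [← Fin.card_Iic]
  refine card_le_card_of_injOn σ (fun i hi => ?_) σ.injective.injOn
  have : Q c ≤ Q i := hQ (mem_Iic.1 hi)
  simpa [hσ] using this

lemma Antitone.card_filter_lt_le [DecidableLT α] (hQ : Antitone Q) (hσ : Q = T ∘ σ) (c : Fin n) :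
    #{j | Q c < T j} ≤ c := by
  rw [← Fin.card_Iio]
  refine card_le_card_of_injOn σ.symm (fun j hj => ?_) σ.symm.injective.injOn
  have hlt : Q c < Q (σ.symm j) := by simpa [hσ] using hj
  exact mem_Iio.2 (lt_of_not_ge fun h => (hQ h).not_gt hlt)

end Rank

lemma abs_sub_rank_le_card_window {n : ℕ} {T Q : Fin n → ℝ} (hQ : Antitone Q)
    {σ : Equiv.Perm (Fin n)} (hσ : Q = T ∘ σ) (i₀ c : Fin n) {γ : ℝ}
    (hc : |Q c - T i₀| ≤ γ) :
    |(c : ℝ) - #{j | j ≠ i₀ ∧ T i₀ ≤ T j}| ≤ #{j | j ≠ i₀ ∧ |T j - T i₀| ≤ γ} := by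
  obtain ⟨hlo, hhi⟩ := abs_le.1 hc
  have hup : ({j | Q c ≤ T j} : Finset (Fin n)) ⊆
      insert i₀ (({j | j ≠ i₀ ∧ T i₀ ≤ T j} : Finset (Fin n)) ∪
        ({j | j ≠ i₀ ∧ |T j - T i₀| ≤ γ} : Finset (Fin n))) := by
    intro j hj
    simp only [mem_filter, mem_univ, true_and, mem_insert, mem_union] at hj ⊢
    by_cases hj₀ : j = i₀
    · exact Or.inl hj₀
    · by_cases hTj : T i₀ ≤ T j
      · exact Or.inr (Or.inl ⟨hj₀, hTj⟩)
      · exact Or.inr (Or.inr ⟨hj₀, abs_le.2 ⟨by linarith, by linarith⟩⟩)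
  have hdown : ({j | j ≠ i₀ ∧ T i₀ ≤ T j} : Finset (Fin n)) ⊆
      ({j | Q c < T j} : Finset (Fin n)) ∪ ({j | j ≠ i₀ ∧ |T j - T i₀| ≤ γ} : Finset (Fin n)) := by
    intro j hj
    simp only [mem_filter, mem_univ, true_and, mem_union] at hj ⊢
    by_cases hTj : Q c < T j
    · exact Or.inl hTj
    · exact Or.inr ⟨hj.1, abs_le.2 ⟨by linarith, by linarith⟩⟩
  have h₁ := (hQ.succ_le_card_filter_le hσ c).trans
    ((card_le_card hup).trans ((card_insert_le _ _).trans (add_le_add_left (card_union_le _ _) 1)))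
  have h₂ := (card_le_card hdown).trans
    ((card_union_le _ _).trans (add_le_add_left (hQ.card_filter_lt_le hσ c) _))
  rw [abs_sub_le_iff, sub_le_iff_le_add', sub_le_iff_le_add']
  exact ⟨by exact_mod_cast Nat.le_of_add_le_add_right h₁, by exact_mod_cast h₂⟩

lemma Measure.pi_univ_pi_update_const {ι β : Type*} [Fintype ι] [DecidableEq ι]
    [MeasurableSpace β] (ν : Measure β) [SigmaFinite ν] (i : ι) (A B : Set β) :
    Measure.pi (fun _ : ι => ν) (Set.univ.pi (Function.update (fun _ => B) i A)) =
      ν A * ν B ^ (Fintype.card ι - 1) := by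
  simp only [Measure.pi_pi, Function.apply_update (fun _ => ν),
    prod_update_of_mem (mem_univ i), prod_const, ← compl_eq_univ_sdiff, card_compl, card_singleton]

lemma expMeasure_Iic {r : ℝ} (hr : 0 < r) {t : ℝ} (ht : 0 ≤ t) :
    expMeasure r (Set.Iic t) = ENNReal.ofReal (1 - Real.exp (-(r * t))) := by
  have := isProbabilityMeasure_expMeasure hr
  rw [← ofReal_cdf, cdf_expMeasure_eq hr, if_pos ht]

lemma expMeasure_Ici_zero {r : ℝ} (hr : 0 < r) : expMeasure r (Set.Ici 0) = 1 := by
  have := isProbabilityMeasure_expMeasure hr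
  rw [← Set.compl_Iio, prob_compl_eq_one_iff measurableSet_Iio]
  refine measure_mono_null Set.Iio_subset_Iic_self ?_
  rw [expMeasure_Iic hr le_rfl]
  simp

lemma ofReal_one_sub_le_pi_expMeasure {r δ : ℝ} (hr : 0 < r) {m : ℕ} (hδ : 0 < δ)
    (hδm : δ ≤ m) (i₀ : Fin (m + 1)) :
    ENNReal.ofReal (1 - δ) ≤ Measure.pi (fun _ : Fin (m + 1) => expMeasure r)
      (Set.univ.pi (Function.update (fun _ => Set.Iic (Real.log (m / δ) / r)) i₀ (Set.Ici 0))) := by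
  have := isProbabilityMeasure_expMeasure hr
  have hm : (0 : ℝ) < m := hδ.trans_le hδm
  have ht : 0 ≤ Real.log (m / δ) / r :=
    div_nonneg (Real.log_nonneg ((one_le_div hδ).2 hδm)) hr.le
  have htail : Real.exp (-(r * (Real.log (m / δ) / r))) = δ / m := by
    rw [mul_div_cancel₀ _ hr.ne', Real.exp_neg, Real.exp_log (by positivity), inv_div]
  have hbernoulli : 1 - δ ≤ (1 - δ / m) ^ m := by
    have := one_add_mul_le_pow (a := -(δ / m)) (by linarith [(div_le_one hm).2 hδm]) m
    rwa [mul_neg, mul_div_cancel₀ _ hm.ne', ← sub_eq_add_neg, ← sub_eq_add_neg] at this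
  rw [Measure.pi_univ_pi_update_const, expMeasure_Ici_zero hr, expMeasure_Iic hr ht, htail,
    Fintype.card_fin, Nat.add_sub_cancel, one_mul,
    ← ENNReal.ofReal_pow (sub_nonneg.2 ((div_le_one hm).2 hδm))]
  exact ENNReal.ofReal_le_ofReal hbernoulli

theorem privCRT_accuracy_general
    (ε ΔT δ : ℝ) (hε : 0 < ε) (hΔT : 0 < ΔT) (hδ : δ ∈ Set.Ioo (0 : ℝ) 1)
    (m : ℕ) (hm : 1 ≤ m)
    (T Q : Fin (m + 1) → ℝ)
    (hQanti : Antitone Q) (hQperm : ∃ σ : Equiv.Perm (Fin (m + 1)), Q = T ∘ σ)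
    (s : Fin (m + 1) → ℝ) (hs : s = fun c => -(|Q c - T 0| / (2 * ΔT)))
    (ν : Measure ℝ)
    (hν : ν = ProbabilityTheory.expMeasure (ε / 2))
    (chat : (Fin (m + 1) → ℝ) → Fin (m + 1))
    (hchat : ∀ Z : Fin (m + 1) → ℝ, ∀ c : Fin (m + 1), s c + Z c ≤ s (chat Z) + Z (chat Z))
    (γ : ℝ) (hγ : γ = 4 * ΔT / ε * Real.log (m / δ)) :
    ENNReal.ofReal (1 - δ) ≤
      (Measure.pi fun _ : Fin (m + 1) => ν)
        {Z | |((1 + (chat Z : ℕ) : ℝ) / (m + 1)) -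
              ((1 + ((Finset.univ.filter
                  (fun j : Fin (m + 1) => j ≠ 0 ∧ T 0 ≤ T j)).card : ℕ) : ℝ) / (m + 1))| ≤
            ((Finset.univ.filter
                (fun j : Fin (m + 1) => j ≠ 0 ∧ |T j - T 0| ≤ γ)).card : ℝ) / (m + 1)} := by
  obtain ⟨σ, hσ⟩ := hQperm
  subst hν hs
  set i₀ := σ.symm 0
  set t := Real.log (m / δ) / (ε / 2)
  have hγt : γ = 2 * ΔT * t := by simp only [hγ, t]; field_simp; ring
  have hQi₀ : Q i₀ = T 0 := by simp [hσ, i₀]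
  have hδm : δ ≤ m := hδ.2.le.trans (by exact_mod_cast hm)
  have ht : 0 ≤ t := div_nonneg (Real.log_nonneg ((one_le_div hδ.1).2 hδm)) (by positivity)
  refine (ofReal_one_sub_le_pi_expMeasure (half_pos hε) hδ.1 hδm i₀).trans
    (measure_mono fun Z hZ => ?_)
  have hZ₀ : 0 ≤ Z i₀ := by simpa using hZ i₀ trivial
  have hsel : |Q (chat Z) - T 0| / (2 * ΔT) ≤ t := by
    by_cases h : chat Z = i₀
    · simpa [h, hQi₀] using ht
    · have hZt : Z (chat Z) ≤ t := by simpa [h] using hZ (chat Z) trivial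
      have := hchat Z i₀
      simp only [hQi₀, sub_self, abs_zero, zero_div, neg_zero, zero_add] at this
      linarith
  have hwindow : |Q (chat Z) - T 0| ≤ γ := by
    rw [div_le_iff₀ (by positivity)] at hsel
    rwa [hγt, mul_comm]
  have hpos : (0 : ℝ) < m + 1 := by positivity
  rw [Set.mem_ofPred_eq, ← sub_div, abs_div, abs_of_pos hpos, add_sub_add_left_eq_sub]
  gcongr
  exact abs_sub_rank_le_card_window hQanti hσ 0 (chat Z) hwindow

/-- **Accuracy of the private conditional randomization test (PrivCRT).**
Given statistics `T_0,…,T_m` with decreasing sort `Q`, scores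
`s_c = −|Q_c − T_0|/(2Δ_T)`, i.i.d. exponential noise `Z_c` of density
`(ε/2)exp(−εz/2)` on `z ≥ 0`, a noisy-argmax rank `ĉ(Z)`, private p-value
`p̂ = (1+ĉ)/(m+1)`, true rank `c* = #{j ∈ [m] : T_j ≥ T_0}` with `p* = (1+c*)/(m+1)`,
`γ = (4Δ_T/ε)log(m/δ)` and `G_γ = #{j ∈ [m] : |T_j − T_0| ≤ γ}`, with probability
at least `1 − δ` we have `|p̂ − p*| ≤ G_γ/(m+1)`. -/
theorem privCRT_accuracy
    (ε ΔT δ : ℝ) (hε : 0 < ε) (hΔT : 0 < ΔT) (hδ : δ ∈ Set.Ioo (0 : ℝ) 1)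
    (m : ℕ) (hm : 1 ≤ m)
    (T Q : Fin (m + 1) → ℝ)
    (hQanti : Antitone Q) (hQperm : ∃ σ : Equiv.Perm (Fin (m + 1)), Q = T ∘ σ)
    (s : Fin (m + 1) → ℝ) (hs : s = fun c => -(|Q c - T 0| / (2 * ΔT)))
    (ν : Measure ℝ) [IsProbabilityMeasure ν]
    (hν : ν = ProbabilityTheory.expMeasure (ε / 2))
    (chat : (Fin (m + 1) → ℝ) → Fin (m + 1))
    (hchat : ∀ Z : Fin (m + 1) → ℝ, ∀ c : Fin (m + 1), s c + Z c ≤ s (chat Z) + Z (chat Z))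
    (γ : ℝ) (hγ : γ = 4 * ΔT / ε * Real.log (m / δ)) :
    ENNReal.ofReal (1 - δ) ≤
      (Measure.pi fun _ : Fin (m + 1) => ν)
        {Z | |((1 + (chat Z : ℕ) : ℝ) / (m + 1)) -
              ((1 + ((Finset.univ.filter
                  (fun j : Fin (m + 1) => j ≠ 0 ∧ T 0 ≤ T j)).card : ℕ) : ℝ) / (m + 1))| ≤
            ((Finset.univ.filter
                (fun j : Fin (m + 1) => j ≠ 0 ∧ |T j - T 0| ≤ γ)).card : ℝ) / (m + 1)} :=
  privCRT_accuracy_general ε ΔT δ hε hΔT hδ m hm T Q hQanti hQperm s hs ν hν chat hchat γ hγ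
end

section
/- Let ε > 0, Δ > 0, k ≥ 1, and let x, x' ∈ ℝ^k with ‖x − x'‖_1 ≤ Δ. Let W = (W_1,…,W_k) have i.i.d. coordinates distributed as Lap(0, Δ/ε), i.e., with density (ε/(2Δ))·exp(−ε|w|/Δ) on ℝ. Then for every Borel set S ⊆ ℝ^k, Pr[x + W ∈ S] ≤ exp(ε) · Pr[x' + W ∈ S]. -/
/-!
The law of `x + W` has density `t ↦ ∏ᵢ p(tᵢ - xᵢ)` with respect to Lebesgue measure, where `p` is
the `Lap(0, σ)` density, `σ = Δ / ε`. By the triangle inequality `p(a) ≤ exp(|a - b| / σ) p(b)`,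
so the density at `x` is at most `exp(‖x - x'‖₁ / σ) ≤ exp ε` times the density at `x'`, pointwise;
integrating over `S` gives the claim.
-/

open scoped ENNReal

namespace MeasureTheory

theorem lintegral_fin_nat_prod_eq_prod {n : ℕ} {E : Type*}
    [MeasurableSpace E] {μ : Fin n → Measure E} [∀ i, SigmaFinite (μ i)]
    {f : Fin n → E → ℝ≥0∞} (hf : ∀ i, Measurable (f i)) :
    ∫⁻ x : Fin n → E, ∏ i, f i (x i) ∂(Measure.pi μ) = ∏ i, ∫⁻ x, f i x ∂(μ i) := by
  induction n with
  | zero => simp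
  | succ n ih =>
      calc
        _ = ∫⁻ x : E × (Fin n → E),
            f 0 x.1 * ∏ i : Fin n, f i.succ (x.2 i)
            ∂((μ 0).prod (Measure.pi (fun i ↦ μ i.succ))) := by
          rw [← ((measurePreserving_piFinSuccAbove μ 0).symm).lintegral_comp_emb
            (MeasurableEquiv.measurableEmbedding _)]
          simp_rw [MeasurableEquiv.piFinSuccAbove_symm_apply, Fin.insertNthEquiv,
            Fin.prod_univ_succ, Fin.insertNth_zero, Equiv.coe_fn_mk, Fin.cons_succ,
            Fin.zero_succAbove, cast_eq, Fin.cons_zero]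
        _ = (∫⁻ x, f 0 x ∂μ 0) * ∏ i : Fin n, ∫⁻ x, f i.succ x ∂(μ i.succ) := by
          have hprod : Measurable fun y : Fin n → E ↦ ∏ i, f i.succ (y i) :=
            Finset.measurable_prod _ fun i _ ↦ (hf i.succ).comp (measurable_pi_apply i)
          rw [← ih fun i ↦ hf i.succ, ← lintegral_prod_mul (hf 0).aemeasurable hprod.aemeasurable]
        _ = ∏ i, ∫⁻ x, f i x ∂(μ i) := by rw [Fin.prod_univ_succ]

theorem Measure.pi_withDensity {n : ℕ} {E : Type*}
    [MeasurableSpace E] {μ : Fin n → Measure E} [∀ i, SigmaFinite (μ i)]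
    {f : Fin n → E → ℝ≥0∞} (hf : ∀ i, Measurable (f i))
    [∀ i, SigmaFinite ((μ i).withDensity (f i))] :
    Measure.pi (fun i ↦ (μ i).withDensity (f i)) =
      (Measure.pi μ).withDensity (fun x ↦ ∏ i, f i (x i)) := by
  refine Measure.pi_eq fun s hs ↦ ?_
  rw [withDensity_apply _ (MeasurableSet.univ_pi hs), Measure.restrict_pi_pi,
    lintegral_fin_nat_prod_eq_prod hf]
  exact Finset.prod_congr rfl fun i _ ↦ (withDensity_apply _ (hs i)).symm

theorem withDensity_preimage_add_left {G : Type*} [MeasurableSpace G] [AddGroup G]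
    [MeasurableAdd G] (μ : Measure G) [μ.IsAddLeftInvariant] (f : G → ℝ≥0∞) (x : G)
    {S : Set G} (hS : MeasurableSet S) :
    μ.withDensity f ((x + ·) ⁻¹' S) = ∫⁻ t in S, f (-x + t) ∂μ := by
  have hS' : MeasurableSet ((x + ·) ⁻¹' S) := measurable_const_add x hS
  rw [withDensity_apply _ hS', ← lintegral_indicator hS', ← lintegral_indicator hS,
    ← lintegral_add_left_eq_self (S.indicator fun t ↦ f (-x + t)) x]
  congr 1 with w
  rw [← Set.indicator_comp_right]
  simp [Function.comp_def]

theorem withDensity_preimage_add_left_le {G : Type*} [MeasurableSpace G] [AddGroup G]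
    [MeasurableAdd G] (μ : Measure G) [μ.IsAddLeftInvariant] {f : G → ℝ≥0∞} {c : ℝ≥0∞}
    (hc : c ≠ ∞) {x x' : G} (h : ∀ t, f (-x + t) ≤ c * f (-x' + t))
    {S : Set G} (hS : MeasurableSet S) :
    μ.withDensity f ((x + ·) ⁻¹' S) ≤ c * μ.withDensity f ((x' + ·) ⁻¹' S) := by
  rw [withDensity_preimage_add_left μ f x hS, withDensity_preimage_add_left μ f x' hS,
    ← lintegral_const_mul' _ _ hc]
  exact lintegral_mono fun t ↦ h t

end MeasureTheory

noncomputable def laplacePDFReal (b x : ℝ) : ℝ := (2 * b)⁻¹ * Real.exp (-|x| / b)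

theorem measurable_laplacePDFReal (b : ℝ) : Measurable (laplacePDFReal b) := by
  unfold laplacePDFReal; fun_prop

section Laplace

variable {b : ℝ}

theorem laplacePDFReal_nonneg (hb : 0 ≤ b) (x : ℝ) : 0 ≤ laplacePDFReal b x := by
  unfold laplacePDFReal; positivity

theorem laplacePDFReal_le_exp_mul (hb : 0 ≤ b) (x y : ℝ) :
    laplacePDFReal b x ≤ Real.exp (|x - y| / b) * laplacePDFReal b y := by
  unfold laplacePDFReal
  rw [mul_left_comm, ← Real.exp_add, ← add_div]
  gcongr
  linarith [abs_sub_abs_le_abs_sub y x, abs_sub_comm x y]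

theorem prod_laplacePDFReal_le_exp_mul {ι : Type*} [Fintype ι] (hb : 0 ≤ b) (u v : ι → ℝ) :
    ∏ i, laplacePDFReal b (u i) ≤
      Real.exp (∑ i, |u i - v i| / b) * ∏ i, laplacePDFReal b (v i) := by
  rw [Real.exp_sum, ← Finset.prod_mul_distrib]
  exact Finset.prod_le_prod (fun i _ ↦ laplacePDFReal_nonneg hb _)
    fun i _ ↦ laplacePDFReal_le_exp_mul hb _ _

end Laplace

open MeasureTheory

theorem laplace_mechanism_dp_general
    (ε Δ : ℝ) (hε : 0 < ε) (hΔ : 0 < Δ)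
    (k : ℕ)
    (x x' : Fin k → ℝ) (hsens : ∑ i, |x i - x' i| ≤ Δ)
    (ν : Measure ℝ)
    (hν : ν = volume.withDensity
      (fun w => ENNReal.ofReal ((2 * (Δ / ε))⁻¹ * Real.exp (-|w| / (Δ / ε))))) :
    ∀ S : Set (Fin k → ℝ), MeasurableSet S →
      (Measure.pi fun _ : Fin k => ν) {W | (fun i => x i + W i) ∈ S} ≤
        ENNReal.ofReal (Real.exp ε) *
          (Measure.pi fun _ : Fin k => ν) {W | (fun i => x' i + W i) ∈ S} := by
  intro S hS
  have hσ : 0 < Δ / ε := div_pos hΔ hε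
  have hshift : ∑ i, |x i - x' i| / (Δ / ε) ≤ ε := by
    rw [← Finset.sum_div, div_le_iff₀ hσ, mul_div_cancel₀ _ hε.ne']
    exact hsens
  obtain rfl : ν = volume.withDensity fun w ↦ ENNReal.ofReal (laplacePDFReal (Δ / ε) w) := hν
  rw [Measure.pi_withDensity (μ := fun _ ↦ volume)
    (f := fun _ w ↦ ENNReal.ofReal (laplacePDFReal (Δ / ε) w))
    fun _ ↦ (measurable_laplacePDFReal _).ennreal_ofReal]
  refine withDensity_preimage_add_left_le _ ENNReal.ofReal_ne_top (fun t ↦ ?_) hS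
  simp only [← ENNReal.ofReal_prod_of_nonneg fun i _ ↦ laplacePDFReal_nonneg hσ.le _,
    ← ENNReal.ofReal_mul (Real.exp_pos ε).le]
  refine ENNReal.ofReal_le_ofReal
    ((prod_laplacePDFReal_le_exp_mul hσ.le _ (-x' + t)).trans ?_)
  refine mul_le_mul_of_nonneg_right (Real.exp_le_exp.mpr ?_)
    (Finset.prod_nonneg fun i _ ↦ laplacePDFReal_nonneg hσ.le _)
  have hdiff : ∀ i, |(-x + t) i - (-x' + t) i| = |x i - x' i| := fun i ↦ by
    rw [abs_sub_comm]; congr 1; simp only [Pi.add_apply, Pi.neg_apply]; ring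
  simpa only [hdiff] using hshift

/-- **The Laplace mechanism is ε-differentially private.**
If `x, x' ∈ ℝ^k` satisfy `‖x − x'‖₁ ≤ Δ` and `W` has i.i.d. `Lap(0, Δ/ε)`
coordinates, then for every Borel set `S ⊆ ℝ^k`,
`Pr[x + W ∈ S] ≤ exp(ε) · Pr[x' + W ∈ S]`. -/
theorem laplace_mechanism_dp
    (ε Δ : ℝ) (hε : 0 < ε) (hΔ : 0 < Δ)
    (k : ℕ) (hk : 1 ≤ k)
    (x x' : Fin k → ℝ) (hsens : ∑ i, |x i - x' i| ≤ Δ)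
    (ν : Measure ℝ) [IsProbabilityMeasure ν]
    (hν : ν = volume.withDensity
      (fun w => ENNReal.ofReal ((2 * (Δ / ε))⁻¹ * Real.exp (-|w| / (Δ / ε))))) :
    ∀ S : Set (Fin k → ℝ), MeasurableSet S →
      (Measure.pi fun _ : Fin k => ν) {W | (fun i => x i + W i) ∈ S} ≤
        ENNReal.ofReal (Real.exp ε) *
          (Measure.pi fun _ : Fin k => ν) {W | (fun i => x' i + W i) ∈ S} :=
  laplace_mechanism_dp_general ε Δ hε hΔ k x x' hsens ν hν
end
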